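/- arXiv:1610.02990 — 2 statements merged into one kernel-verified Lean document; each statement's English description precedes it below -/
import Mathlib

section
/- Let G ⊆ PGL_n(k) be a finite p-group with p > n, where k is algebraically closed of characteristic 0. Then G has a fixed point on P^{n−1}. -/
/-!
The preimage of `G` in `SL_n(k)` is finite, since the kernel of `SL_n(k) → PGL_n(k)` consists of
`n`-th roots of unity, and a Sylow `p`-subgroup `Q` of it still maps onto the `p`-group `G`. So it
suffices that a finite `p`-group `Q` acting linearly on `V` with `dim V < p` has a common
eigenvector. Induct on `|Q|`. A maximal subgroup `N` of the nilpotent group `Q` is normal, and has a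
common eigenvector by induction. `Q` permutes the weights of `N` by conjugation; weight vectors of
distinct weights are linearly independent, so there are at most `dim V < p` weights, and a
`p`-group acting on fewer than `p` points fixes one of them, say `χ`. Its weight space is then `Q`-stable, and an eigenvector there of any
`g ∉ N` spans a line fixed by `N` and `g`, hence by `Q`.
-/

open scoped MatrixGroups

/-- The action of an element of `GL_n(k)` on the projective space `P^{n-1}`. -/
noncomputable def glAct {k : Type*} [Field k] {n : ℕ} (A : GL (Fin n) k) :
    Projectivization k (Fin n → k) → Projectivization k (Fin n → k) :=
  Projectivization.map (Matrix.GeneralLinearGroup.toLin A).toLinearEquiv.toLinearMap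
    (Matrix.GeneralLinearGroup.toLin A).toLinearEquiv.injective

open scoped LinearAlgebra.Projectivization

open MulAction Projectivization

section CommonEigenspace

variable (k V : Type*) [Field k] [AddCommGroup V] [Module k V]
variable {G : Type*} [Monoid G] [DistribMulAction G V] [SMulCommClass G k V]

def commonEigenspace (χ : G → k) : Submodule k V where
  carrier := {v | ∀ g : G, g • v = χ g • v}
  add_mem' hv hw g := by simp only [smul_add, hv g, hw g]
  zero_mem' g := by simp only [smul_zero]
  smul_mem' c v hv g := by rw [smul_comm, hv g, smul_comm]

variable {k V}

theorem mem_commonEigenspace {χ : G → k} {v : V} :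
    v ∈ commonEigenspace k V χ ↔ ∀ g : G, g • v = χ g • v := Iff.rfl

theorem linearIndependent_of_mem_commonEigenspace {ι : Type*} {χ : ι → G → k}
    (hχ : Function.Injective χ) {v : ι → V} (hv : ∀ i, v i ∈ commonEigenspace k V (χ i))
    (hv0 : ∀ i, v i ≠ 0) : LinearIndependent k v := by
  classical
  rw [linearIndependent_iff']
  intro s
  induction s using Finset.induction_on with
  | empty => simp
  | @insert a s ha ih =>
    intro c hc
    have hs : ∀ i ∈ s, c i = 0 := by
      intro i hi
      obtain ⟨g, hg⟩ := Function.ne_iff.mp (hχ.ne (ne_of_mem_of_not_mem hi ha))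
      -- `g - χ a g` kills the `a`-term and rescales the others by `χ j g - χ a g`
      have hterm (j : ι) :
          (c j * (χ j g - χ a g)) • v j = g • (c j • v j) - χ a g • (c j • v j) := by
        rw [smul_comm g, hv j g, smul_smul, smul_smul, ← sub_smul, mul_sub, mul_comm (c j),
          mul_comm (c j)]
      have hsum : ∑ j ∈ s, (c j * (χ j g - χ a g)) • v j = 0 := calc
        _ = ∑ j ∈ insert a s, (c j * (χ j g - χ a g)) • v j := by
          rw [Finset.sum_insert ha, sub_self, mul_zero, zero_smul, zero_add]
        _ = g • ∑ j ∈ insert a s, c j • v j - χ a g • ∑ j ∈ insert a s, c j • v j := by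
          simp only [hterm, Finset.sum_sub_distrib, Finset.smul_sum]
        _ = 0 := by rw [hc, smul_zero, smul_zero, sub_self]
      exact (mul_eq_zero.mp (ih _ hsum i hi)).resolve_right (sub_ne_zero.mpr hg)
    rw [Finset.sum_insert ha, Finset.sum_eq_zero fun i hi => by rw [hs i hi, zero_smul],
      add_zero] at hc
    intro i hi
    rcases Finset.mem_insert.mp hi with rfl | hi
    · exact (smul_eq_zero.mp hc).resolve_right (hv0 i)
    · exact hs i hi

variable (k V G) in
def Weights : Type _ := {χ : G → k // commonEigenspace k V χ ≠ ⊥}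

theorem Weights.exists_linearIndependent : ∃ v : Weights k V G → V, LinearIndependent k v := by
  have hv (χ : Weights k V G) : ∃ v ∈ commonEigenspace k V χ.1, v ≠ 0 :=
    (Submodule.ne_bot_iff _).mp χ.2
  choose v hv hv0 using hv
  exact ⟨v, linearIndependent_of_mem_commonEigenspace Subtype.val_injective hv hv0⟩

variable [FiniteDimensional k V]

instance : Finite (Weights k V G) :=
  Weights.exists_linearIndependent.choose_spec.finite

theorem Weights.card_le_finrank : Nat.card (Weights k V G) ≤ Module.finrank k V := by
  have := Fintype.ofFinite (Weights k V G)
  rw [Nat.card_eq_fintype_card]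
  exact Weights.exists_linearIndependent.choose_spec.fintype_card_le_finrank

end CommonEigenspace

section Projective

variable {k V G : Type*} [Field k] [AddCommGroup V] [Module k V]
  [Group G] [DistribMulAction G V] [SMulCommClass G k V]

theorem Projectivization.smul_mk_eq_mk_iff (g : G) {v : V} (hv : v ≠ 0) :
    g • mk k v hv = mk k v hv ↔ ∃ c : k, g • v = c • v := by
  rw [smul_mk, mk_eq_mk_iff']
  exact exists_congr fun c => eq_comm

theorem Projectivization.mk_mem_fixedPoints_iff {v : V} (hv : v ≠ 0) :
    mk k v hv ∈ fixedPoints G (ℙ k V) ↔ ∃ χ : G → k, v ∈ commonEigenspace k V χ := by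
  simp only [mem_fixedPoints, smul_mk_eq_mk_iff, mem_commonEigenspace]
  exact Classical.skolem

theorem Weights.nonempty_of_fixedPoints_nonempty (h : (fixedPoints G (ℙ k V)).Nonempty) :
    Nonempty (Weights k V G) := by
  obtain ⟨x, hx⟩ := h
  induction x using Projectivization.ind with | h v hv =>
  obtain ⟨χ, hχ⟩ := (mk_mem_fixedPoints_iff hv).mp hx
  exact ⟨χ, (Submodule.ne_bot_iff _).mpr ⟨v, hχ, hv⟩⟩

variable {N : Subgroup G} [N.Normal]

theorem smul_mem_commonEigenspace_conj {χ : N → k} {v : V}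
    (hv : v ∈ commonEigenspace k V χ) (g : G) :
    g • v ∈ commonEigenspace k V (fun h => χ (MulAut.conjNormal g⁻¹ h)) := by
  intro h
  have hconj : (h : G) * g = g * (MulAut.conjNormal g⁻¹ h : G) := by
    rw [MulAut.conjNormal_apply]; group
  rw [Subgroup.smul_def, smul_smul, hconj, mul_smul, ← Subgroup.smul_def, hv, smul_comm]

instance : MulAction G (Weights k V N) where
  smul g χ := ⟨fun h => χ.1 (MulAut.conjNormal g⁻¹ h), by
    obtain ⟨v, hv, hv0⟩ := (Submodule.ne_bot_iff _).mp χ.2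
    exact (Submodule.ne_bot_iff _).mpr
      ⟨g • v, smul_mem_commonEigenspace_conj hv g, (smul_ne_zero_iff_ne g).mpr hv0⟩⟩
  one_smul χ := Subtype.ext <| funext fun h => by
    change χ.1 (MulAut.conjNormal 1⁻¹ h) = χ.1 h
    rw [inv_one, map_one]; rfl
  mul_smul g g' χ := Subtype.ext <| funext fun h => by
    change χ.1 (MulAut.conjNormal (g * g')⁻¹ h) =
      χ.1 (MulAut.conjNormal g'⁻¹ (MulAut.conjNormal g⁻¹ h))
    rw [mul_inv_rev, map_mul]; rfl

theorem Weights.exists_forall_smul_eq [FiniteDimensional k V] [Nonempty (Weights k V N)]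
    {p : ℕ} [Fact p.Prime] (hG : IsPGroup p G) (hV : Module.finrank k V < p) :
    ∃ χ : Weights k V N, ∀ g : G, g • χ = χ :=
  hG.nonempty_fixed_point_of_prime_not_dvd_card (Weights k V N)
    (Nat.not_dvd_of_pos_of_lt Nat.card_pos (Weights.card_le_finrank.trans_lt hV))

theorem smul_mem_commonEigenspace {χ : Weights k V N} (hχ : ∀ g : G, g • χ = χ) {v : V}
    (hv : v ∈ commonEigenspace k V χ.1) (g : G) : g • v ∈ commonEigenspace k V χ.1 := by
  rw [← hχ g]
  exact smul_mem_commonEigenspace_conj hv g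

theorem fixedPoints_projectivization_nonempty_of_isCoatom [IsAlgClosed k]
    [FiniteDimensional k V] (hN : IsCoatom N) {χ : Weights k V N} (hχ : ∀ g : G, g • χ = χ) :
    (fixedPoints G (ℙ k V)).Nonempty := by
  obtain ⟨g, -, hg⟩ := SetLike.exists_of_lt hN.lt_top
  let W := commonEigenspace k V χ.1
  have : Nontrivial W := Submodule.nontrivial_iff_ne_bot.mpr χ.2
  obtain ⟨μ, hμ⟩ := Module.End.exists_eigenvalue ((DistribSMul.toLinearMap k V g).restrict
    (p := W) (q := W) fun _ hv => smul_mem_commonEigenspace hχ hv g)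
  obtain ⟨u, hu⟩ := hμ.exists_hasEigenvector
  have hu0 : (u : V) ≠ 0 := by simpa using hu.2
  refine ⟨mk k (u : V) hu0, fun a => ?_⟩
  suffices stabilizer G (mk k (u : V) hu0) = ⊤ from
    mem_stabilizer_iff.mp (this ▸ Subgroup.mem_top a)
  refine hN.2 _ (SetLike.lt_iff_le_and_exists.mpr ⟨fun h hh => ?_, g, ?_, hg⟩)
  · exact (smul_mk_eq_mk_iff _ hu0).mpr ⟨χ.1 ⟨h, hh⟩, u.2 ⟨h, hh⟩⟩
  · exact (smul_mk_eq_mk_iff _ hu0).mpr ⟨μ, congrArg Subtype.val hu.apply_eq_smul⟩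

end Projective

theorem IsPGroup.fixedPoints_projectivization_nonempty {k V G : Type*} [Field k] [IsAlgClosed k]
    [AddCommGroup V] [Module k V] [FiniteDimensional k V] [Nontrivial V]
    [Group G] [Finite G] [DistribMulAction G V] [SMulCommClass G k V]
    {p : ℕ} [Fact p.Prime] (hG : IsPGroup p G) (hV : Module.finrank k V < p) :
    (fixedPoints G (ℙ k V)).Nonempty := by
  induction hcard : Nat.card G using Nat.strong_induction_on generalizing G with | _ m ih =>
  have := hG.isNilpotent
  obtain hbot | ⟨N, hN, -⟩ := eq_top_or_exists_le_coatom (⊥ : Subgroup G)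
  · have := Subgroup.subsingleton_iff.mp (subsingleton_iff_bot_eq_top.mp hbot)
    exact ⟨Classical.arbitrary _, fun g => by rw [Subsingleton.elim g 1, one_smul]⟩
  · have : N.Normal := Subgroup.NormalizerCondition.normal_of_coatom N
      Group.normalizerCondition_of_isNilpotent hN
    obtain ⟨g, -, hg⟩ := SetLike.exists_of_lt hN.lt_top
    have := Weights.nonempty_of_fixedPoints_nonempty
      (ih _ (hcard ▸ Finite.card_subtype_lt hg) (hG.to_subgroup N) rfl)
    obtain ⟨χ, hχ⟩ := Weights.exists_forall_smul_eq (N := N) hG hV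
    exact fixedPoints_projectivization_nonempty_of_isCoatom hN hχ

theorem Subgroup.finite_comap {G G' : Type*} [Group G] [Group G'] (f : G →* G') [Finite f.ker]
    (K : Subgroup G') [Finite K] : Finite (K.comap f) := by
  rw [MonoidHom.finite_iff_finite_ker_range (f.subgroupComap K)]
  refine ⟨Finite.of_injective (fun x => (⟨x.1, congrArg Subtype.val x.2⟩ : f.ker)) ?_,
    inferInstance⟩
  intro x y hxy
  have h := congrArg Subtype.val hxy
  exact Subtype.ext (Subtype.ext h)

theorem Sylow.map_eq_top_of_surjective {G G' : Type*} [Group G] [Finite G] [Group G'] {p : ℕ}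
    [Fact p.Prime] (hG' : IsPGroup p G') {f : G →* G'} (hf : Function.Surjective f)
    (P : Sylow p G) : P.map f = ⊤ :=
  ((P.mapSurjective hf).3 (hG'.to_subgroup ⊤) le_top).symm

theorem IsPGroup.exists_isPGroup_map_eq {S T : Type*} [Group S] [Group T] {p : ℕ}
    [Fact p.Prime] (π : S →* T) [Finite π.ker] {G : Subgroup T} [Finite G]
    (hG : IsPGroup p G) (hGπ : G ≤ π.range) :
    ∃ Q : Subgroup S, Finite Q ∧ IsPGroup p Q ∧ Q.map π = G := by
  have := Subgroup.finite_comap π G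
  have hsurj : Function.Surjective (π.subgroupComap G) := fun g => by
    obtain ⟨s, hs⟩ := hGπ g.2
    exact ⟨⟨s, show π s ∈ G from hs ▸ g.2⟩, Subtype.ext hs⟩
  let P : Sylow p (G.comap π) := default
  refine ⟨P.map (G.comap π).subtype,
    .of_equiv _ (P.1.equivMapOfInjective _ (G.comap π).subtype_injective).toEquiv,
    P.2.map _, ?_⟩
  rw [Subgroup.map_map, show π.comp (G.comap π).subtype = G.subtype.comp (π.subgroupComap G)
    from rfl, ← Subgroup.map_map, Sylow.map_eq_top_of_surjective hG hsurj,
    ← MonoidHom.range_eq_map, Subgroup.range_subtype]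

theorem exists_specialLinearGroup_smul_eq_glAct {k : Type*} [Field k] [IsAlgClosed k] {n : ℕ}
    (hn : 0 < n) (A : GL (Fin n) k) : ∃ B : SL(n, k), ∀ x, B • x = glAct A x := by
  obtain ⟨c, hc⟩ := IsAlgClosed.exists_pow_nat_eq (A.det : k) hn
  have hdet : (c⁻¹ • (A : Matrix (Fin n) (Fin n) k)).det = 1 := by
    rw [Matrix.det_smul, Fintype.card_fin, inv_pow, hc, Matrix.GeneralLinearGroup.val_det_apply,
      inv_mul_cancel₀ (by simpa using A.det.ne_zero)]
  let B : SL(n, k) := ⟨c⁻¹ • (A : Matrix (Fin n) (Fin n) k), hdet⟩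
  refine ⟨B, fun x => ?_⟩
  induction x using Projectivization.ind with | h v hv =>
  rw [smul_mk, glAct, map_mk, mk_eq_mk_iff']
  exact ⟨c⁻¹, (Matrix.smul_mulVec c⁻¹ (A : Matrix (Fin n) (Fin n) k) v).symm⟩

theorem stmt10_general (p n : ℕ) (hp : p.Prime) (hn : 1 ≤ n) (hpn : n < p)
    (k : Type*) [Field k] [IsAlgClosed k]
    (G : Subgroup (Equiv.Perm (Projectivization k (Fin n → k)))) [Finite G]
    (hG : IsPGroup p G)
    (hlin : ∀ g ∈ G, ∃ A : GL (Fin n) k, ∀ x, g x = glAct A x) :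
    ∃ x : Projectivization k (Fin n → k), ∀ g ∈ G, g x = x := by
  have := Fact.mk hp
  have : NeZero n := ⟨by omega⟩
  let π := MulAction.toPermHom SL(n, k) (ℙ k (Fin n → k))
  have : Finite π.ker := by
    rw [SL_mulAction_ker]
    exact .of_equiv _ (Matrix.SpecialLinearGroup.center_equiv_rootsOfUnity' 0).symm.toEquiv
  have hGπ : G ≤ π.range := fun g hg => by
    obtain ⟨A, hA⟩ := hlin g hg
    obtain ⟨B, hB⟩ := exists_specialLinearGroup_smul_eq_glAct hn A
    exact ⟨B, Equiv.ext fun x => (hB x).trans (hA x).symm⟩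
  obtain ⟨Q, _, hQ, hQG⟩ := hG.exists_isPGroup_map_eq π hGπ
  obtain ⟨x, hx⟩ := hQ.fixedPoints_projectivization_nonempty (k := k) (V := Fin n → k)
    (by simpa using hpn)
  refine ⟨x, fun g hg => ?_⟩
  obtain ⟨b, hb, rfl⟩ := hQG ▸ hg
  exact hx ⟨b, hb⟩

/-- Let `G ⊆ PGL_n(k)` be a finite `p`-group with `p > n`, `k` algebraically closed of
characteristic `0`. Then `G` has a fixed point on `P^{n-1}`. Here `G` is realized as a group
of permutations of `P^{n-1}` each of which is induced by an element of `GL_n(k)`. -/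
theorem stmt10 (p n : ℕ) (hp : p.Prime) (hn : 1 ≤ n) (hpn : n < p)
    (k : Type*) [Field k] [IsAlgClosed k] [CharZero k]
    (G : Subgroup (Equiv.Perm (Projectivization k (Fin n → k)))) [Finite G]
    (hG : IsPGroup p G)
    (hlin : ∀ g ∈ G, ∃ A : GL (Fin n) k, ∀ x, g x = glAct A x) :
    ∃ x : Projectivization k (Fin n → k), ∀ g ∈ G, g x = x :=
  stmt10_general p n hp hn hpn k G hG hlin
end

section
/- Let G be a finite p-group with p ≥ 3 acting on P^1 × P^1 by automorphisms. Then G has a fixed point on P^1 × P^1. -/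
open scoped MatrixGroups

/-!
Since `p` is odd, every element of `G` has odd order and is therefore a power of its square.
The square of an element swapping the two factors preserves the fibres of the first projection,
hence so would the element itself, which is absurd; so `G` acts factorwise, through two finite
`p`-subgroups of `PGL₂(k)`. Such a subgroup `H` fixes a point of `P¹`: a nontrivial central
element `ζ` of `H` has an eigenline `a`, the `H`-orbit of `a` consists of fixed points of `ζ`,
and a nontrivial Möbius transformation has at most two fixed points, whereas a nontrivial orbit
of a `p`-group has at least `p ≥ 3` points.
-/

open Equiv Module
open scoped LinearAlgebra.Projectivization

theorem Submonoid.mem_of_sq_mem_of_odd_orderOf {M : Type*} [Monoid M] {S : Submonoid M} {g : M}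
    (hg : Odd (orderOf g)) (hsq : g ^ 2 ∈ S) : g ∈ S := by
  obtain ⟨m, hm⟩ := hg
  have : (g ^ 2) ^ (m + 1) = g := by
    rw [← pow_mul, show 2 * (m + 1) = orderOf g + 1 by omega, pow_succ, pow_orderOf_eq_one,
      one_mul]
  exact this ▸ pow_mem hsq _

theorem IsPGroup.odd_orderOf {p : ℕ} {G : Type*} [Group G] (hG : IsPGroup p G) (hp : Odd p)
    (g : G) : Odd (orderOf g) := by
  obtain ⟨n, hn⟩ := hG g
  exact hp.pow.of_dvd_nat (orderOf_dvd_of_pow_eq_one hn)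

theorem IsPGroup.smul_eq_self_of_ncard_orbit_lt {p : ℕ} [Fact p.Prime] {G α : Type*} [Group G]
    [Finite G] [MulAction G α] (hG : IsPGroup p G) {a : α}
    (ha : (MulAction.orbit G a).ncard < p) (g : G) : g • a = a := by
  have hfin := Finite.finite_mulAction_orbit (M := G) a
  have := hfin.to_subtype
  obtain ⟨n, hn⟩ := hG.card_orbit a
  rw [Nat.card_coe_set_eq] at hn
  obtain rfl : n = 0 := by
    by_contra hn0
    have := Nat.le_self_pow hn0 p
    omega
  exact (Set.ncard_le_one hfin).1 (by simp [hn]) _ ⟨g, rfl⟩ _ (MulAction.mem_orbit_self a)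

namespace Equiv.Perm

variable {Z X Y : Type*}

def fiberPreserving (π : Z → X) : Submonoid (Perm Z) where
  carrier := {g | ∀ z z', π z = π z' → π (g z) = π (g z')}
  mul_mem' hg hh z z' h := hg _ _ (hh z z' h)
  one_mem' _ _ h := h

def descend (π : Z → X) (s : X → Z) (hs : Function.LeftInverse π s) {G : Subgroup (Perm Z)}
    (hG : G.toSubmonoid ≤ fiberPreserving π) : G →* Perm X :=
  equivUnitsEnd.symm.toMonoidHom.comp <| MonoidHom.toHomUnits
    { toFun := fun g x => π ((g : Perm Z) (s x))
      map_one' := funext hs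
      map_mul' := fun g _ => funext fun _ => hG g.2 _ _ (hs _).symm }

theorem descend_apply (π : Z → X) (s : X → Z) (hs : Function.LeftInverse π s)
    {G : Subgroup (Perm Z)} (hG : G.toSubmonoid ≤ fiberPreserving π) (g : G) (x : X) :
    descend π s hs hG g x = π ((g : Perm Z) (s x)) :=
  rfl

theorem mem_fiberPreserving_fst_of_apply_eq {g : Perm (X × Y)} {φ : X → X} {ψ : Y → Y}
    (hg : ∀ x y, g (x, y) = (φ x, ψ y)) : g ∈ fiberPreserving Prod.fst := by
  rintro ⟨x, y⟩ ⟨x', y'⟩ (rfl : x = x')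
  simp [hg]

theorem mem_fiberPreserving_snd_of_apply_eq {g : Perm (X × Y)} {φ : X → X} {ψ : Y → Y}
    (hg : ∀ x y, g (x, y) = (φ x, ψ y)) : g ∈ fiberPreserving Prod.snd := by
  rintro ⟨x, y⟩ ⟨x', y'⟩ (rfl : y = y')
  simp [hg]

theorem sq_mem_fiberPreserving_fst_of_apply_eq_swap {g : Perm (X × Y)} {φ : Y → X}
    {ψ : X → Y} (hg : ∀ x y, g (x, y) = (φ y, ψ x)) :
    g ^ 2 ∈ fiberPreserving Prod.fst := by
  rintro ⟨x, y⟩ ⟨x', y'⟩ (rfl : x = x')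
  simp [sq, hg]

theorem notMem_fiberPreserving_fst_of_apply_eq_swap [Nontrivial X] [Nonempty Y]
    {g : Perm (X × Y)} {φ : Y → X} {ψ : X → Y} (hg : ∀ x y, g (x, y) = (φ y, ψ x)) :
    g ∉ fiberPreserving Prod.fst := by
  intro hfib
  obtain ⟨y₀⟩ := ‹Nonempty Y›
  have hconst (x : X) : x = φ y₀ := by
    calc x = (g (g.symm (x, y₀))).1 := by simp
      _ = (g ((g.symm (x, y₀)).1, y₀)).1 := hfib _ _ rfl
      _ = φ y₀ := by rw [hg]
  exact not_subsingleton X ⟨fun x x' => (hconst x).trans (hconst x').symm⟩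

end Equiv.Perm

theorem LinearMap.apply_eq_smul_of_three_eigenvectors {K V : Type*} [Field K] [AddCommGroup V]
    [Module K V] (hV : finrank K V = 2) (f : V →ₗ[K] V) {u v w : V} {α β γ : K}
    (huv : LinearIndependent K ![u, v]) (huw : LinearIndependent K ![u, w])
    (hvw : LinearIndependent K ![v, w]) (hu : f u = α • u) (hv : f v = β • v)
    (hw : f w = γ • w) (x : V) : f x = α • x := by
  have hspan : Submodule.span K {u, v} = ⊤ := by
    simpa [Matrix.range_cons, Set.pair_comm] using
      huv.span_eq_top_of_card_eq_finrank (by simp [hV])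
  have hcomb (x : V) : ∃ s t : K, s • u + t • v = x :=
    Submodule.mem_span_pair.mp (hspan ▸ Submodule.mem_top)
  obtain ⟨s, t, rfl⟩ := hcomb w
  have hs : s ≠ 0 := by
    rintro rfl
    simpa using (hvw.eq_zero_of_pair (s := t) (t := -1) (by module)).2
  have ht : t ≠ 0 := by
    rintro rfl
    simpa using (huw.eq_zero_of_pair (s := s) (t := -1) (by module)).2
  simp only [map_add, map_smul, hu, hv] at hw
  obtain ⟨hαγ, hβγ⟩ := huv.eq_zero_of_pair (s := s * (α - γ)) (t := t * (β - γ))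
    (by linear_combination (norm := module) hw)
  have hαβ : α = β := by
    rw [mul_eq_zero, sub_eq_zero] at hαγ hβγ
    exact (hαγ.resolve_left hs).trans (hβγ.resolve_left ht).symm
  obtain ⟨s', t', rfl⟩ := hcomb x
  simp only [map_add, map_smul, hu, hv, hαβ]
  module

namespace Projectivization

variable {L K V : Type*} [Group L] [Field K] [AddCommGroup V] [Module K V]
  [DistribMulAction L V] [SMulCommClass L K V]

theorem nontrivial_of_one_lt_finrank (hV : 1 < finrank K V) : Nontrivial (ℙ K V) := by
  have : Nontrivial V := nontrivial_of_finrank_pos (R := K) (by omega)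
  obtain ⟨v, hv⟩ := exists_ne (0 : V)
  obtain ⟨w, hvw⟩ := exists_linearIndependent_pair_of_one_lt_finrank hV hv
  have hw : w ≠ 0 := hvw.ne_zero 1
  exact ⟨mk K v hv, mk K w hw,
    (independent_pair_iff_ne _ _).1 ((independent_mk_iff_LinearIndependent hv hw).2 hvw)⟩

theorem smul_mk_eq_mk_iff_s12 (g : L) {v : V} (hv : v ≠ 0) :
    g • mk K v hv = mk K v hv ↔ ∃ c : K, g • v = c • v := by
  rw [smul_mk, mk_eq_mk_iff']
  simp only [eq_comm]

theorem exists_smul_eq_self [IsAlgClosed K] [FiniteDimensional K V] [Nontrivial V] (g : L) :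
    ∃ x : ℙ K V, g • x = x := by
  obtain ⟨c, hc⟩ := End.exists_eigenvalue (DistribSMul.toLinearMap K V g)
  obtain ⟨v, hv⟩ := hc.exists_hasEigenvector
  exact ⟨mk K v hv.2, (smul_mk_eq_mk_iff_s12 g hv.2).2 ⟨c, hv.apply_eq_smul⟩⟩

theorem smul_eq_self_of_three_fixed (hV : finrank K V = 2) {g : L} {a b c : ℙ K V}
    (hab : a ≠ b) (hac : a ≠ c) (hbc : b ≠ c) (ha : g • a = a) (hb : g • b = b)
    (hc : g • c = c) (x : ℙ K V) : g • x = x := by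
  have indep {u v : V} (hu : u ≠ 0) (hv : v ≠ 0) (h : mk K u hu ≠ mk K v hv) :
      LinearIndependent K ![u, v] :=
    (independent_mk_iff_LinearIndependent hu hv).1 ((independent_pair_iff_ne _ _).2 h)
  induction a using ind with | h u hu => ?_
  induction b using ind with | h v hv => ?_
  induction c using ind with | h w hw => ?_
  induction x using ind with | h y hy => ?_
  obtain ⟨α, hα⟩ := (smul_mk_eq_mk_iff_s12 g hu).1 ha
  obtain ⟨β, hβ⟩ := (smul_mk_eq_mk_iff_s12 g hv).1 hb
  obtain ⟨γ, hγ⟩ := (smul_mk_eq_mk_iff_s12 g hw).1 hc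
  exact (smul_mk_eq_mk_iff_s12 g hy).2 ⟨α, LinearMap.apply_eq_smul_of_three_eigenvectors hV
    (DistribSMul.toLinearMap K V g) (indep hu hv hab) (indep hu hw hac) (indep hv hw hbc)
    hα hβ hγ y⟩

theorem exists_fixed_of_isPGroup [IsAlgClosed K] (hV : finrank K V = 2) {p : ℕ} [Fact p.Prime]
    (hp : 3 ≤ p) (H : Subgroup (Perm (ℙ K V))) [Finite H] (hH : IsPGroup p H)
    (hlin : ∀ h ∈ H, ∃ g : L, ∀ x, h x = g • x) : ∃ a, ∀ h ∈ H, h a = a := by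
  have : FiniteDimensional K V := .of_finrank_pos (by omega)
  have : Nontrivial V := nontrivial_of_finrank_pos (R := K) (by omega)
  rcases subsingleton_or_nontrivial H with _ | _
  · obtain ⟨a⟩ : Nonempty (ℙ K V) := inferInstance
    refine ⟨a, fun h hh => ?_⟩
    rw [show h = 1 from congrArg Subtype.val (Subsingleton.elim (⟨h, hh⟩ : H) 1)]
    rfl
  have := hH.center_nontrivial
  obtain ⟨ζ, hζ⟩ := exists_ne (1 : Subgroup.center H)
  obtain ⟨g, hg⟩ := hlin _ ζ.1.2
  obtain ⟨a, ha⟩ := exists_smul_eq_self (K := K) (V := V) g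
  have horbit : ∀ b ∈ MulAction.orbit H a, g • b = b := by
    rintro _ ⟨h, rfl⟩
    have hcomm :=
      congrArg (fun σ : H => (σ : Perm (ℙ K V)) a) (Subgroup.mem_center_iff.1 ζ.2 h)
    simp only [Subgroup.coe_mul, Perm.mul_apply, hg] at hcomm
    rw [ha] at hcomm
    exact hcomm.symm
  have hle : (MulAction.orbit H a).ncard ≤ 2 := by
    by_contra hlt
    obtain ⟨b, c, d, hb, hc, hd, hbc, hbd, hcd⟩ :=
      (Set.two_lt_ncard_iff (Finite.finite_mulAction_orbit a)).1 (not_le.1 hlt)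
    refine hζ (Subtype.ext (Subtype.ext (Perm.ext fun x => ?_)))
    rw [hg]
    exact smul_eq_self_of_three_fixed hV hbc hbd hcd (horbit b hb) (horbit c hc) (horbit d hd) x
  exact ⟨a, fun h hh => hH.smul_eq_self_of_ncard_orbit_lt (by omega) ⟨h, hh⟩⟩

theorem exists_fixed_of_isPGroup_of_monoidHom [IsAlgClosed K] (hV : finrank K V = 2) {p : ℕ}
    [Fact p.Prime] (hp : 3 ≤ p) {Γ : Type*} [Group Γ] [Finite Γ] (hΓ : IsPGroup p Γ)
    (ρ : Γ →* Perm (ℙ K V)) (hρ : ∀ γ, ∃ g : L, ∀ x, ρ γ x = g • x) :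
    ∃ a, ∀ γ, ρ γ a = a := by
  have : Finite ρ.range := Finite.of_surjective _ ρ.rangeRestrict_surjective
  obtain ⟨a, ha⟩ := exists_fixed_of_isPGroup hV hp ρ.range
    (hΓ.of_surjective _ ρ.rangeRestrict_surjective) (by rintro _ ⟨γ, rfl⟩; exact hρ γ)
  exact ⟨a, fun γ => ha _ ⟨γ, rfl⟩⟩

end Projectivization

theorem stmt12_general (p : ℕ) (hp : p.Prime) (hp3 : 3 ≤ p)
    (k : Type*) [Field k] [IsAlgClosed k]
    (G : Subgroup (Equiv.Perm (Projectivization k (Fin 2 → k) × Projectivization k (Fin 2 → k))))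
    [Finite G] (hG : IsPGroup p G)
    (haut : ∀ g ∈ G,
      (∃ A B : GL (Fin 2) k, ∀ x y, g (x, y) = (glAct A x, glAct B y)) ∨
      (∃ A B : GL (Fin 2) k, ∀ x y, g (x, y) = (glAct A y, glAct B x))) :
    ∃ z : Projectivization k (Fin 2 → k) × Projectivization k (Fin 2 → k),
      ∀ g ∈ G, g z = z := by
  have : Fact p.Prime := ⟨hp⟩
  have hV : finrank k (Fin 2 → k) = 2 := by simp
  have : Nontrivial (ℙ k (Fin 2 → k)) :=
    Projectivization.nontrivial_of_one_lt_finrank (by omega)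
  -- `glAct A x` is `A • x` for the action of `GL (Fin 2) k` on `ℙ k (Fin 2 → k)`, by definition.
  have hprod (g) (hg : g ∈ G) :
      ∃ A B : GL (Fin 2) k, ∀ x y, g (x, y) = (A • x, B • y) := by
    refine (haut g hg).resolve_right fun ⟨A, B, hAB⟩ => ?_
    have hodd : Odd (orderOf g) :=
      Subgroup.orderOf_coe ⟨g, hg⟩ ▸ hG.odd_orderOf (hp.odd_of_ne_two (by omega)) ⟨g, hg⟩
    exact Perm.notMem_fiberPreserving_fst_of_apply_eq_swap hAB
      (Submonoid.mem_of_sq_mem_of_odd_orderOf hodd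
        (Perm.sq_mem_fiberPreserving_fst_of_apply_eq_swap hAB))
  obtain ⟨x₀⟩ : Nonempty (ℙ k (Fin 2 → k)) := inferInstance
  have hfst : G.toSubmonoid ≤ Perm.fiberPreserving Prod.fst := fun g hg =>
    let ⟨_, _, hAB⟩ := hprod g hg; Perm.mem_fiberPreserving_fst_of_apply_eq hAB
  have hsnd : G.toSubmonoid ≤ Perm.fiberPreserving Prod.snd := fun g hg =>
    let ⟨_, _, hAB⟩ := hprod g hg; Perm.mem_fiberPreserving_snd_of_apply_eq hAB
  obtain ⟨a, ha⟩ := Projectivization.exists_fixed_of_isPGroup_of_monoidHom hV hp3 hG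
    (Perm.descend Prod.fst (·, x₀) (fun _ => rfl) hfst) fun g =>
      let ⟨A, _, hAB⟩ := hprod g g.2; ⟨A, fun x => by simp [Perm.descend_apply, hAB]⟩
  obtain ⟨b, hb⟩ := Projectivization.exists_fixed_of_isPGroup_of_monoidHom hV hp3 hG
    (Perm.descend Prod.snd (x₀, ·) (fun _ => rfl) hsnd) fun g =>
      let ⟨_, B, hAB⟩ := hprod g g.2; ⟨B, fun x => by simp [Perm.descend_apply, hAB]⟩
  refine ⟨(a, b), fun g hg => ?_⟩
  obtain ⟨A, B, hAB⟩ := hprod g hg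
  simpa [Perm.descend_apply, hAB] using And.intro (ha ⟨g, hg⟩) (hb ⟨g, hg⟩)

/-- Let `G` be a finite `p`-group with `p ≥ 3` acting on `P^1 × P^1` by automorphisms: every
element of `G` either acts as a pair of elements of `PGL_2(k)` on the two factors, or composes
such a pair with the swap of the two factors. Then `G` has a fixed point on `P^1 × P^1`. -/
theorem stmt12 (p : ℕ) (hp : p.Prime) (hp3 : 3 ≤ p)
    (k : Type*) [Field k] [IsAlgClosed k] [CharZero k]
    (G : Subgroup (Equiv.Perm (Projectivization k (Fin 2 → k) × Projectivization k (Fin 2 → k))))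
    [Finite G] (hG : IsPGroup p G)
    (haut : ∀ g ∈ G,
      (∃ A B : GL (Fin 2) k, ∀ x y, g (x, y) = (glAct A x, glAct B y)) ∨
      (∃ A B : GL (Fin 2) k, ∀ x y, g (x, y) = (glAct A y, glAct B x))) :
    ∃ z : Projectivization k (Fin 2 → k) × Projectivization k (Fin 2 → k),
      ∀ g ∈ G, g z = z :=
  stmt12_general p hp hp3 k G hG haut
end
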